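/- Let k ≥ 1 and let β_1, …, β_k ∈ ℝ. The operator Z(g)(x) = ∏_{j=1}^k x_j^{-2β_j - 1} ∫_{x_1/2}^{2x_1} ⋯ ∫_{x_k/2}^{2x_k} g(y) ∏_{j=1}^k y_j^{2β_j} dy, x ∈ (0,∞)^k, is bounded from L^p((0,∞)^k, μ_β) into itself for every 1 ≤ p < ∞. -/

import Mathlib

/-!
`Z` is the integral operator against `μ_β` with kernel
`K(x, y) = 1[y ∈ Q(x)] ∏ x_j^{-2β_j-1}`, where `Q(x) = ∏ (x_j/2, 2x_j)`. Since `y ∈ Q(x)` iff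
`x ∈ Q(y)`, the substitution `t = x_j s` shows that both marginals `∫ K(x, ·) dμ_β` and
`∫ K(·, y) dμ_β` are constants, `A = ∏ ∫_{1/2}^2 s^{2β_j} ds` and `B = (log 4)^k`. Schur's test
(Hölder in `y`, then Tonelli) then bounds `Z` on `L^p(μ_β)` by `A^{1-1/p} B^{1/p}`.
-/

open Real MeasureTheory Set
open scoped ENNReal

noncomputable def muBeta {k : ℕ} (β : Fin k → ℝ) : Measure (Fin k → ℝ) :=
  ((volume : Measure (Fin k → ℝ)).restrict {x | ∀ j, 0 < x j}).withDensity
    (fun x => ENNReal.ofReal (∏ j, x j ^ (2 * β j)))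

section SchurTest

variable {α β : Type*} [MeasurableSpace α] [MeasurableSpace β] {μ : Measure α} {ν : Measure β}

theorem lintegral_mul_rpow_le {K G : β → ℝ≥0∞} (hK : AEMeasurable K ν) (hG : AEMeasurable G ν)
    {p : ℝ} (hp : 1 ≤ p) :
    (∫⁻ y, K y * G y ∂ν) ^ p ≤ (∫⁻ y, K y ∂ν) ^ (p - 1) * ∫⁻ y, K y * G y ^ p ∂ν := by
  have hp0 : 0 < p := one_pos.trans_le hp
  have hq : 0 ≤ 1 - 1 / p := sub_nonneg.2 ((div_le_one hp0).2 hp)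
  have hr : 0 ≤ 1 / p := by positivity
  -- Hölder with exponents `1 - 1/p`, `1/p` applied to `K G = K ^ (1 - 1/p) (K G ^ p) ^ (1/p)`
  have holder : ∫⁻ y, K y * G y ∂ν ≤
      (∫⁻ y, K y ∂ν) ^ (1 - 1 / p) * (∫⁻ y, K y * G y ^ p ∂ν) ^ (1 / p) := by
    calc ∫⁻ y, K y * G y ∂ν
        = ∫⁻ y, K y ^ (1 - 1 / p) * (K y * G y ^ p) ^ (1 / p) ∂ν := by
          refine lintegral_congr fun y => ?_
          rw [ENNReal.mul_rpow_of_nonneg _ _ hr, ← ENNReal.rpow_mul, mul_one_div_cancel hp0.ne',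
            ENNReal.rpow_one, ← mul_assoc, ← ENNReal.rpow_add_of_nonneg _ _ hq hr, sub_add_cancel,
            ENNReal.rpow_one]
      _ ≤ _ := ENNReal.lintegral_mul_norm_pow_le hK (hK.mul (hG.pow_const p)) hq hr
          (sub_add_cancel 1 _)
  calc (∫⁻ y, K y * G y ∂ν) ^ p
      ≤ ((∫⁻ y, K y ∂ν) ^ (1 - 1 / p) * (∫⁻ y, K y * G y ^ p ∂ν) ^ (1 / p)) ^ p :=
        ENNReal.rpow_le_rpow holder hp0.le
    _ = _ := by
        rw [ENNReal.mul_rpow_of_nonneg _ _ hp0.le, ← ENNReal.rpow_mul, ← ENNReal.rpow_mul,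
          one_div_mul_cancel hp0.ne', ENNReal.rpow_one, sub_mul, one_mul,
          one_div_mul_cancel hp0.ne']

theorem lintegral_rpow_lintegral_kernel_le [SFinite μ] [SFinite ν] {K : α → β → ℝ≥0∞}
    (hK : Measurable (Function.uncurry K)) {A B : ℝ≥0∞} (hA : ∀ᵐ x ∂μ, ∫⁻ y, K x y ∂ν ≤ A)
    (hB : ∀ᵐ y ∂ν, ∫⁻ x, K x y ∂μ ≤ B) {G : β → ℝ≥0∞} (hG : AEMeasurable G ν) {p : ℝ}
    (hp : 1 ≤ p) :
    ∫⁻ x, (∫⁻ y, K x y * G y ∂ν) ^ p ∂μ ≤ A ^ (p - 1) * B * ∫⁻ y, G y ^ p ∂ν := by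
  have hGp : AEMeasurable (fun y => G y ^ p) ν := hG.pow_const p
  have hKGp : AEMeasurable (Function.uncurry fun x y => K x y * G y ^ p) (μ.prod ν) :=
    hK.aemeasurable.mul hGp.comp_snd
  calc ∫⁻ x, (∫⁻ y, K x y * G y ∂ν) ^ p ∂μ
      ≤ ∫⁻ x, A ^ (p - 1) * ∫⁻ y, K x y * G y ^ p ∂ν ∂μ := by
        refine lintegral_mono_ae ?_
        filter_upwards [hA] with x hx
        calc (∫⁻ y, K x y * G y ∂ν) ^ p
            ≤ (∫⁻ y, K x y ∂ν) ^ (p - 1) * ∫⁻ y, K x y * G y ^ p ∂ν :=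
              lintegral_mul_rpow_le (hK.comp measurable_prodMk_left).aemeasurable hG hp
          _ ≤ _ := by gcongr
    _ = A ^ (p - 1) * ∫⁻ y, (∫⁻ x, K x y ∂μ) * G y ^ p ∂ν := by
        rw [lintegral_const_mul'' _ hKGp.lintegral_prod_right, lintegral_lintegral_swap hKGp]
        congr 1
        refine lintegral_congr fun y => ?_
        exact lintegral_mul_const'' _ (hK.comp measurable_prodMk_right).aemeasurable
    _ ≤ A ^ (p - 1) * ∫⁻ y, B * G y ^ p ∂ν := by
        gcongr A ^ (p - 1) * ?_
        refine lintegral_mono_ae ?_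
        filter_upwards [hB] with y hy
        gcongr
    _ = A ^ (p - 1) * B * ∫⁻ y, G y ^ p ∂ν := by
        rw [lintegral_const_mul'' _ hGp, mul_assoc]

theorem eLpNorm_le_of_enorm_le_lintegral_kernel {E F : Type*} [NormedAddCommGroup E]
    [NormedAddCommGroup F] [SFinite μ] [SFinite ν] {K : α → β → ℝ≥0∞}
    (hK : Measurable (Function.uncurry K)) {A B : ℝ≥0∞} (hA : ∀ᵐ x ∂μ, ∫⁻ y, K x y ∂ν ≤ A)
    (hB : ∀ᵐ y ∂ν, ∫⁻ x, K x y ∂μ ≤ B) {p : ℝ≥0∞} (hp : 1 ≤ p) (hp' : p ≠ ∞) {f : α → E}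
    {g : β → F} (hg : AEStronglyMeasurable g ν)
    (hfg : ∀ᵐ x ∂μ, ‖f x‖ₑ ≤ ∫⁻ y, K x y * ‖g y‖ₑ ∂ν) :
    eLpNorm f p μ ≤ (A ^ (p.toReal - 1) * B) ^ (1 / p.toReal) * eLpNorm g p ν := by
  have hp0 : p ≠ 0 := (one_pos.trans_le hp).ne'
  have hpr : 1 ≤ p.toReal := by simpa using ENNReal.toReal_mono hp' hp
  rw [eLpNorm_eq_lintegral_rpow_enorm_toReal hp0 hp',
    eLpNorm_eq_lintegral_rpow_enorm_toReal hp0 hp',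
    ← ENNReal.mul_rpow_of_nonneg _ _ (by positivity)]
  gcongr
  calc ∫⁻ x, ‖f x‖ₑ ^ p.toReal ∂μ
      ≤ ∫⁻ x, (∫⁻ y, K x y * ‖g y‖ₑ ∂ν) ^ p.toReal ∂μ := by
        refine lintegral_mono_ae ?_
        filter_upwards [hfg] with x hx
        gcongr
    _ ≤ _ := lintegral_rpow_lintegral_kernel_le hK hA hB hg.enorm hpr

end SchurTest

theorem integral_rpow_mul_bounds (b : ℝ) {a c x : ℝ} (ha : 0 ≤ a) (hc : 0 ≤ c) (hx : 0 < x) :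
    ∫ t in a * x..c * x, t ^ b = x ^ (b + 1) * ∫ s in a..c, s ^ b := by
  have hscale : ∫ s in a..c, (x * s) ^ b = x ^ b * ∫ s in a..c, s ^ b := by
    rw [← intervalIntegral.integral_const_mul]
    refine intervalIntegral.integral_congr fun s hs => ?_
    have hs0 : 0 ≤ s := le_trans (le_min ha hc) hs.1
    exact Real.mul_rpow hx.le hs0
  rw [intervalIntegral.integral_comp_mul_left (fun t => t ^ b) hx.ne', smul_eq_mul,
    mul_comm x a, mul_comm x c] at hscale
  rw [Real.rpow_add_one hx.ne', mul_right_comm, ← hscale]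
  field_simp

theorem integral_Ioo_rpow_mul_bounds (b : ℝ) {a c x : ℝ} (ha : 0 ≤ a) (hac : a ≤ c) (hx : 0 < x) :
    ∫ t in Ioo (a * x) (c * x), t ^ b = x ^ (b + 1) * ∫ s in a..c, s ^ b := by
  rw [← integral_Ioc_eq_integral_Ioo, ← intervalIntegral.integral_of_le (by gcongr),
    integral_rpow_mul_bounds b ha (ha.trans hac) hx]

theorem integrableOn_Ioo_rpow (b : ℝ) {a c : ℝ} (ha : 0 < a) :
    IntegrableOn (fun t : ℝ => t ^ b) (Ioo a c) := by
  refine (ContinuousOn.integrableOn_Icc ?_).mono_set Ioo_subset_Icc_self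
  exact continuousOn_id.rpow_const fun t ht => Or.inl (ha.trans_le ht.1).ne'

section DyadicBox

variable {k : ℕ}

def dyadicBox (x : Fin k → ℝ) : Set (Fin k → ℝ) := {y | ∀ j, x j / 2 < y j ∧ y j < 2 * x j}

theorem dyadicBox_eq_pi (x : Fin k → ℝ) :
    dyadicBox x = univ.pi fun j => Ioo (2⁻¹ * x j) (2 * x j) := by
  ext y
  simp [dyadicBox, div_eq_inv_mul]

theorem measurableSet_dyadicBox (x : Fin k → ℝ) : MeasurableSet (dyadicBox x) := by
  rw [dyadicBox_eq_pi]
  exact .univ_pi fun _ => measurableSet_Ioo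

theorem measurableSet_setOf_mem_dyadicBox :
    MeasurableSet {z : (Fin k → ℝ) × (Fin k → ℝ) | z.2 ∈ dyadicBox z.1} := by
  have : {z : (Fin k → ℝ) × (Fin k → ℝ) | z.2 ∈ dyadicBox z.1} =
      ⋂ j, {z | z.1 j / 2 < z.2 j} ∩ {z | z.2 j < 2 * z.1 j} := by
    ext z
    simp [dyadicBox, forall_and]
  rw [this]
  exact .iInter fun j => (measurableSet_lt (by fun_prop) (by fun_prop)).inter
    (measurableSet_lt (by fun_prop) (by fun_prop))

theorem mem_dyadicBox_comm {x y : Fin k → ℝ} : y ∈ dyadicBox x ↔ x ∈ dyadicBox y :=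
  forall_congr' fun j => by constructor <;> rintro ⟨h₁, h₂⟩ <;> constructor <;> linarith

theorem dyadicBox_subset_pos {x : Fin k → ℝ} (hx : ∀ j, 0 < x j) :
    dyadicBox x ⊆ {y | ∀ j, 0 < y j} :=
  fun _ hy j => (half_pos (hx j)).trans (hy j).1

theorem lintegral_dyadicBox_prod_rpow {x : Fin k → ℝ} (hx : ∀ j, 0 < x j) (c : Fin k → ℝ) :
    ∫⁻ y in dyadicBox x, ENNReal.ofReal (∏ j, y j ^ c j) =
      ENNReal.ofReal (∏ j, x j ^ (c j + 1) * ∫ s in (2 : ℝ)⁻¹..2, s ^ c j) := by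
  have hpi : volume.restrict (dyadicBox x) =
      Measure.pi fun j => volume.restrict (Ioo (2⁻¹ * x j) (2 * x j)) := by
    rw [dyadicBox_eq_pi, volume_pi, Measure.restrict_pi_pi]
  rw [← ofReal_integral_eq_lintegral_ofReal, hpi,
    integral_fintype_prod_eq_prod (fun j (t : ℝ) => t ^ c j)]
  · congr 1
    refine Finset.prod_congr rfl fun j _ => ?_
    exact integral_Ioo_rpow_mul_bounds _ (by norm_num) (by norm_num) (hx j)
  · rw [hpi]
    exact Integrable.fintype_prod fun j => integrableOn_Ioo_rpow _ (mul_pos (by norm_num) (hx j))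
  · filter_upwards [ae_restrict_mem (measurableSet_dyadicBox x)] with y hy
    exact Finset.prod_nonneg fun j _ => Real.rpow_nonneg (dyadicBox_subset_pos hx hy j).le _

end DyadicBox

section Zop

variable {k : ℕ} (β : Fin k → ℝ)

instance : SFinite (muBeta β) := by
  unfold muBeta
  infer_instance

theorem muBeta_ae_pos : ∀ᵐ x ∂muBeta β, ∀ j, 0 < x j := by
  have hpos : MeasurableSet {x : Fin k → ℝ | ∀ j, 0 < x j} := by
    rw [show {x : Fin k → ℝ | ∀ j, 0 < x j} = univ.pi fun _ => Ioi 0 by ext; simp]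
    exact .univ_pi fun _ => measurableSet_Ioi
  exact (withDensity_absolutelyContinuous _ _).ae_le (ae_restrict_mem hpos)

theorem setLIntegral_dyadicBox_muBeta {x : Fin k → ℝ} (hx : ∀ j, 0 < x j)
    (f : (Fin k → ℝ) → ℝ≥0∞) :
    ∫⁻ y in dyadicBox x, f y ∂muBeta β =
      ∫⁻ y in dyadicBox x, ENNReal.ofReal (∏ j, y j ^ (2 * β j)) * f y := by
  rw [muBeta, restrict_withDensity (measurableSet_dyadicBox x),
    Measure.restrict_restrict (measurableSet_dyadicBox x),
    inter_eq_self_of_subset_left (dyadicBox_subset_pos hx),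
    lintegral_withDensity_eq_lintegral_mul_non_measurable _
      (Finset.measurable_prod _ fun j _ => (measurable_pi_apply j).pow_const _).ennreal_ofReal
      (ae_of_all _ fun _ => ENNReal.ofReal_lt_top)]
  rfl

noncomputable def zKernel (x y : Fin k → ℝ) : ℝ≥0∞ :=
  (dyadicBox x).indicator (fun _ => ENNReal.ofReal (∏ j, x j ^ (-(2 * β j) - 1))) y

theorem measurable_zKernel : Measurable (Function.uncurry (zKernel β)) := by
  change Measurable ({z : (Fin k → ℝ) × (Fin k → ℝ) | z.2 ∈ dyadicBox z.1}.indicator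
    fun z : (Fin k → ℝ) × (Fin k → ℝ) => ENNReal.ofReal (∏ j, z.1 j ^ (-(2 * β j) - 1)))
  exact Measurable.indicator (Finset.measurable_prod _ fun j _ =>
      ((measurable_pi_apply j).comp measurable_fst).pow_const _).ennreal_ofReal
    measurableSet_setOf_mem_dyadicBox

theorem lintegral_zKernel_right {x : Fin k → ℝ} (hx : ∀ j, 0 < x j) :
    ∫⁻ y, zKernel β x y ∂muBeta β =
      ENNReal.ofReal (∏ j, ∫ s in (2 : ℝ)⁻¹..2, s ^ (2 * β j)) := by
  simp only [zKernel]
  rw [lintegral_indicator (measurableSet_dyadicBox x),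
    setLIntegral_dyadicBox_muBeta β hx, lintegral_mul_const' _ _ ENNReal.ofReal_ne_top,
    lintegral_dyadicBox_prod_rpow hx, ← ENNReal.ofReal_mul (Finset.prod_nonneg fun j _ =>
      mul_nonneg (Real.rpow_nonneg (hx j).le _) (intervalIntegral.integral_nonneg (by norm_num)
        fun s hs => Real.rpow_nonneg ((inv_pos.2 two_pos).trans_le hs.1).le _)),
    ← Finset.prod_mul_distrib]
  congr 1
  refine Finset.prod_congr rfl fun j _ => ?_
  rw [mul_right_comm, ← Real.rpow_add (hx j), show 2 * β j + 1 + (-(2 * β j) - 1) = 0 by ring,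
    Real.rpow_zero, one_mul]

theorem lintegral_zKernel_left {y : Fin k → ℝ} (hy : ∀ j, 0 < y j) :
    ∫⁻ x, zKernel β x y ∂muBeta β =
      ENNReal.ofReal (∏ _j : Fin k, ∫ s in (2 : ℝ)⁻¹..2, s ^ (-1 : ℝ)) := by
  have hsymm : ∀ x, zKernel β x y =
      (dyadicBox y).indicator (fun x => ENNReal.ofReal (∏ j, x j ^ (-(2 * β j) - 1))) x := by
    intro x
    by_cases h : y ∈ dyadicBox x
    · rw [zKernel, indicator_of_mem h, indicator_of_mem (mem_dyadicBox_comm.1 h)]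
    · rw [zKernel, indicator_of_notMem h, indicator_of_notMem (mt mem_dyadicBox_comm.2 h)]
  calc ∫⁻ x, zKernel β x y ∂muBeta β
      = ∫⁻ x in dyadicBox y, ENNReal.ofReal (∏ j, x j ^ (2 * β j)) *
          ENNReal.ofReal (∏ j, x j ^ (-(2 * β j) - 1)) := by
        rw [lintegral_congr hsymm, lintegral_indicator (measurableSet_dyadicBox y),
          setLIntegral_dyadicBox_muBeta β hy]
    _ = ∫⁻ x in dyadicBox y, ENNReal.ofReal (∏ j, x j ^ (-1 : ℝ)) := by
        refine setLIntegral_congr_fun (measurableSet_dyadicBox y) fun x hx => ?_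
        have hxpos := dyadicBox_subset_pos hy hx
        rw [← ENNReal.ofReal_mul (Finset.prod_nonneg fun j _ => Real.rpow_nonneg (hxpos j).le _),
          ← Finset.prod_mul_distrib]
        congr 1
        refine Finset.prod_congr rfl fun j _ => ?_
        rw [← Real.rpow_add (hxpos j), show 2 * β j + (-(2 * β j) - 1) = -1 by ring]
    _ = _ := by
        rw [lintegral_dyadicBox_prod_rpow hy]
        simp

noncomputable def Zop (g : (Fin k → ℝ) → ℝ) (x : Fin k → ℝ) : ℝ :=
  (∏ j, x j ^ (-(2 * β j) - 1)) * ∫ y in dyadicBox x, g y * ∏ j, y j ^ (2 * β j)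

theorem enorm_Zop_le_lintegral_zKernel (g : (Fin k → ℝ) → ℝ) {x : Fin k → ℝ}
    (hx : ∀ j, 0 < x j) :
    ‖Zop β g x‖ₑ ≤ ∫⁻ y, zKernel β x y * ‖g y‖ₑ ∂muBeta β := by
  have hprod : ∀ {z : Fin k → ℝ} (c : Fin k → ℝ), (∀ j, 0 < z j) → 0 ≤ ∏ j, z j ^ c j :=
    fun c hz => Finset.prod_nonneg fun j _ => Real.rpow_nonneg (hz j).le (c j)
  calc ‖Zop β g x‖ₑ
      = ENNReal.ofReal (∏ j, x j ^ (-(2 * β j) - 1)) *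
          ‖∫ y in dyadicBox x, g y * ∏ j, y j ^ (2 * β j)‖ₑ := by
        rw [Zop, enorm_mul, Real.enorm_eq_ofReal (hprod _ hx)]
    _ ≤ ENNReal.ofReal (∏ j, x j ^ (-(2 * β j) - 1)) *
          ∫⁻ y in dyadicBox x, ‖g y * ∏ j, y j ^ (2 * β j)‖ₑ := by
        gcongr
        exact enorm_integral_le_lintegral_enorm _
    _ = ENNReal.ofReal (∏ j, x j ^ (-(2 * β j) - 1)) * ∫⁻ y in dyadicBox x, ‖g y‖ₑ ∂muBeta β := by
        rw [setLIntegral_dyadicBox_muBeta β hx]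
        congr 1
        refine setLIntegral_congr_fun (measurableSet_dyadicBox x) fun y hy => ?_
        rw [enorm_mul, Real.enorm_eq_ofReal (hprod _ (dyadicBox_subset_pos hx hy)), mul_comm]
    _ = ∫⁻ y, zKernel β x y * ‖g y‖ₑ ∂muBeta β := by
        rw [← lintegral_const_mul' _ _ ENNReal.ofReal_ne_top,
          ← lintegral_indicator (measurableSet_dyadicBox x)]
        exact lintegral_congr fun y => indicator_mul_left _ _ _

end Zop

theorem Zop_strong_type (k : ℕ) (β : Fin k → ℝ)
    (p : ℝ≥0∞) (hp : 1 ≤ p) (hp' : p ≠ ⊤) :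
    ∃ C > (0 : ℝ), ∀ g : (Fin k → ℝ) → ℝ, MemLp g p (muBeta β) →
      eLpNorm (fun x =>
        (∏ j, x j ^ (-(2 * β j) - 1)) *
          ∫ y in {y : Fin k → ℝ | ∀ j, x j / 2 < y j ∧ y j < 2 * x j},
            g y * ∏ j, y j ^ (2 * β j)) p (muBeta β) ≤
        ENNReal.ofReal C * eLpNorm g p (muBeta β) := by
  set A := ENNReal.ofReal (∏ j, ∫ s in (2 : ℝ)⁻¹..2, s ^ (2 * β j))
  set B := ENNReal.ofReal (∏ _j : Fin k, ∫ s in (2 : ℝ)⁻¹..2, s ^ (-1 : ℝ))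
  set D := (A ^ (p.toReal - 1) * B) ^ (1 / p.toReal)
  have hpr : 1 ≤ p.toReal := by simpa using ENNReal.toReal_mono hp' hp
  have hD : D ≠ ∞ := ENNReal.rpow_ne_top_of_nonneg (by positivity) <| ENNReal.mul_ne_top
    (ENNReal.rpow_ne_top_of_nonneg (sub_nonneg.2 hpr) ENNReal.ofReal_ne_top) ENNReal.ofReal_ne_top
  refine ⟨D.toReal + 1, by positivity, fun g hg => ?_⟩
  calc eLpNorm (Zop β g) p (muBeta β)
      ≤ D * eLpNorm g p (muBeta β) :=
        eLpNorm_le_of_enorm_le_lintegral_kernel (measurable_zKernel β)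
          (by filter_upwards [muBeta_ae_pos β] with x hx using (lintegral_zKernel_right β hx).le)
          (by filter_upwards [muBeta_ae_pos β] with y hy using (lintegral_zKernel_left β hy).le)
          hp hp' hg.1
          (by filter_upwards [muBeta_ae_pos β] with x hx using
            enorm_Zop_le_lintegral_zKernel β g hx)
    _ ≤ ENNReal.ofReal (D.toReal + 1) * eLpNorm g p (muBeta β) := by
        gcongr
        exact (ENNReal.le_ofReal_iff_toReal_le hD (by positivity)).2 (by linarith)
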